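/- Under assumptions (IID), (Obs), (Esp) and (Cont), any measurable minimizer θ̄_n of M_n over Θ converges in probability to θ* as n → ∞. -/

import Mathlib

/-!
Write `g(t, θ) = Ψ(S_θ(t), t)` and `W_k = Y_k - g(t_k, θ*)`. Expanding the square in `M_n`, a
minimizer `θ̄_n` satisfies
`(1/n) ∑ (g(t_k, θ*) - g(t_k, θ̄_n))² ≤ 2 |(1/n) ∑ (g(t_k, θ*) - g(t_k, θ̄_n)) W_k|`.
The left side is a Riemann sum, converging uniformly on `Θ` to `∫₀¹ (g(t, θ*) - g(t, θ))² dt`;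
by (Obs), continuity and compactness this integral is bounded below by some `c > 0` on
`{θ ∈ Θ | r ≤ ‖θ - θ*‖}`. The noise `W_k` is centered by (Esp), pairwise uncorrelated by (IID) and
the independence of `(ε_k)` and `(V_k)`, and has bounded variance by (Cont). Chebyshev's inequality
at the points of a finite net of `Θ`, together with Markov's inequality for `(1/n) ∑ |W_k|` to move
between net points, shows that the right side tends to `0` in probability uniformly in `θ ∈ Θ`.
-/

open MeasureTheory ProbabilityTheory Filter Set
open scoped Topology

lemma natCast_div_mem_Icc {n k : ℕ} (hk : k ∈ Finset.Icc 1 n) : (k : ℝ) / n ∈ Icc (0 : ℝ) 1 := by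
  rw [Finset.mem_Icc] at hk
  exact ⟨by positivity, div_le_one_of_le₀ (by exact_mod_cast hk.2) n.cast_nonneg⟩

section RiemannSums

lemma abs_riemannSum_sub_integral_le {f : ℝ → ℝ} (hf : ContinuousOn f (Icc 0 1)) {n : ℕ}
    (hn : 0 < n) {η : ℝ}
    (hη : ∀ s ∈ Icc (0 : ℝ) 1, ∀ t ∈ Icc (0 : ℝ) 1, |s - t| ≤ (n : ℝ)⁻¹ → |f s - f t| ≤ η) :
    |(n : ℝ)⁻¹ * ∑ k ∈ Finset.Icc 1 n, f (k / n) - ∫ t in (0 : ℝ)..1, f t| ≤ η := by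
  set a : ℕ → ℝ := fun k => k / n
  have hn' : (0 : ℝ) < n := by exact_mod_cast hn
  have hstep : ∀ k, a (k + 1) - a k = (n : ℝ)⁻¹ := fun k => by
    simp only [a]; push_cast; field_simp; ring
  have hle : ∀ k, a k ≤ a (k + 1) := fun k => by linarith [hstep k, inv_pos.2 hn']
  have hsub : ∀ k < n, uIcc (a k) (a (k + 1)) ⊆ Icc 0 1 := fun k hk => by
    rw [uIcc_of_le (hle k)]
    exact Icc_subset_Icc (by positivity) (div_le_one_of_le₀ (by exact_mod_cast hk) hn'.le)
  have hint : ∀ k < n, IntervalIntegrable f volume (a k) (a (k + 1)) := fun k hk =>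
    (hf.mono (hsub k hk)).intervalIntegrable
  have hsplit : ∫ t in (0 : ℝ)..1, f t = ∑ k ∈ Finset.range n, ∫ t in a k..a (k + 1), f t := by
    rw [intervalIntegral.sum_integral_adjacent_intervals hint]
    simp [a, hn'.ne']
  have hsum : (n : ℝ)⁻¹ * ∑ k ∈ Finset.Icc 1 n, f (k / n)
      = ∑ k ∈ Finset.range n, ∫ _ in a k..a (k + 1), f (a (k + 1)) := by
    rw [Finset.mul_sum, ← Finset.Ico_add_one_right_eq_Icc, Finset.sum_Ico_eq_sum_range]
    refine Finset.sum_congr rfl fun k _ => ?_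
    rw [intervalIntegral.integral_const, hstep, smul_eq_mul, add_comm 1 k]
  have hpiece : ∀ k < n, |∫ t in a k..a (k + 1), (f (a (k + 1)) - f t)| ≤ η * (n : ℝ)⁻¹ := by
    intro k hk
    have hbound : ∀ t ∈ uIoc (a k) (a (k + 1)), ‖f (a (k + 1)) - f t‖ ≤ η := fun t ht => by
      have ht' : a k < t ∧ t ≤ a (k + 1) := by rwa [uIoc_of_le (hle k)] at ht
      refine hη _ (hsub k hk right_mem_uIcc) t (hsub k hk (uIoc_subset_uIcc ht)) ?_
      rw [abs_of_nonneg (by linarith [ht'.2])]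
      linarith [hstep k, ht'.1]
    simpa [hstep, abs_of_pos (inv_pos.2 hn')] using
      intervalIntegral.norm_integral_le_of_norm_le_const hbound
  calc |(n : ℝ)⁻¹ * ∑ k ∈ Finset.Icc 1 n, f (k / n) - ∫ t in (0 : ℝ)..1, f t|
      = |∑ k ∈ Finset.range n, ∫ t in a k..a (k + 1), (f (a (k + 1)) - f t)| := by
        rw [hsum, hsplit, ← Finset.sum_sub_distrib]
        refine congrArg _ (Finset.sum_congr rfl fun k hk => ?_)
        rw [intervalIntegral.integral_sub intervalIntegrable_const
          (hint k (Finset.mem_range.1 hk))]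
    _ ≤ ∑ k ∈ Finset.range n, η * (n : ℝ)⁻¹ :=
        (Finset.abs_sum_le_sum_abs _ _).trans
          (Finset.sum_le_sum fun k hk => hpiece k (Finset.mem_range.1 hk))
    _ = η := by rw [Finset.sum_const, Finset.card_range, nsmul_eq_mul]; field_simp

variable {E : Type*} [PseudoMetricSpace E] {Θ : Set E} {u : ℝ → E → ℝ}

lemma ContinuousOn.exists_pos_forall_abs_sub_lt (hΘ : IsCompact Θ)
    (hu : ContinuousOn (fun q : ℝ × E => u q.1 q.2) (Icc 0 1 ×ˢ Θ)) {η : ℝ} (hη : 0 < η) :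
    ∃ δ > 0, ∀ s ∈ Icc (0 : ℝ) 1, ∀ t ∈ Icc (0 : ℝ) 1, ∀ θ ∈ Θ, ∀ θ' ∈ Θ,
      dist s t < δ → dist θ θ' < δ → |u s θ - u t θ'| < η := by
  obtain ⟨δ, hδ, hu'⟩ := Metric.uniformContinuousOn_iff.1
    ((isCompact_Icc.prod hΘ).uniformContinuousOn_of_continuous hu) η hη
  exact ⟨δ, hδ, fun s hs t ht θ hθ θ' hθ' hst hθθ' =>
    hu' (s, θ) ⟨hs, hθ⟩ (t, θ') ⟨ht, hθ'⟩ (by rw [Prod.dist_eq]; exact max_lt hst hθθ')⟩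

theorem tendstoUniformlyOn_riemannSum (hΘ : IsCompact Θ)
    (hu : ContinuousOn (fun q : ℝ × E => u q.1 q.2) (Icc 0 1 ×ˢ Θ)) :
    TendstoUniformlyOn (fun (n : ℕ) θ => (n : ℝ)⁻¹ * ∑ k ∈ Finset.Icc 1 n, u (k / n) θ)
      (fun θ => ∫ t in (0 : ℝ)..1, u t θ) atTop Θ := by
  rw [Metric.tendstoUniformlyOn_iff]
  intro η hη
  obtain ⟨δ, hδ, hmod⟩ := hu.exists_pos_forall_abs_sub_lt hΘ (half_pos hη)
  filter_upwards [eventually_gt_atTop 0,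
    (tendsto_inv_atTop_nhds_zero_nat (𝕜 := ℝ)).eventually (gt_mem_nhds hδ)] with n hn hnδ θ hθ
  rw [dist_comm, Real.dist_eq]
  refine (abs_riemannSum_sub_integral_le (hu.uncurry_right θ hθ) hn
    fun s hs t ht hst => ?_).trans_lt (half_lt_self hη)
  refine (hmod s hs t ht θ hθ θ hθ ?_ (by simpa using hδ)).le
  rw [Real.dist_eq]
  exact hst.trans_lt hnδ

lemma continuousOn_riemannSum (hu : ContinuousOn (fun q : ℝ × E => u q.1 q.2) (Icc 0 1 ×ˢ Θ))
    (n : ℕ) : ContinuousOn (fun θ => (n : ℝ)⁻¹ * ∑ k ∈ Finset.Icc 1 n, u (k / n) θ) Θ :=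
  continuousOn_const.mul <| continuousOn_finsetSum _ fun _ hk =>
    hu.uncurry_left _ (natCast_div_mem_Icc hk)

theorem exists_pos_eventually_le_riemannSum (hΘ : IsCompact Θ)
    (hu : ContinuousOn (fun q : ℝ × E => u q.1 q.2) (Icc 0 1 ×ˢ Θ))
    (hu0 : ∀ t ∈ Icc (0 : ℝ) 1, ∀ θ ∈ Θ, 0 ≤ u t θ) {A : Set E} (hA : IsCompact A)
    (hAΘ : A ⊆ Θ) (hApos : ∀ θ ∈ A, ∃ t ∈ Icc (0 : ℝ) 1, 0 < u t θ) :
    ∃ c > 0, ∀ᶠ n : ℕ in atTop, ∀ θ ∈ A, c ≤ (n : ℝ)⁻¹ * ∑ k ∈ Finset.Icc 1 n, u (k / n) θ := by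
  rcases A.eq_empty_or_nonempty with rfl | hAne
  · exact ⟨1, one_pos, by simp⟩
  have hlim := tendstoUniformlyOn_riemannSum hΘ hu
  obtain ⟨θ₀, hθ₀, hmin⟩ := hA.exists_isMinOn hAne <|
    (hlim.continuousOn (Frequently.of_forall (continuousOn_riemannSum hu))).mono hAΘ
  have hpos : 0 < ∫ t in (0 : ℝ)..1, u t θ₀ :=
    intervalIntegral.integral_pos zero_lt_one (hu.uncurry_right θ₀ (hAΘ hθ₀))
      (fun t ht => hu0 t (Ioc_subset_Icc_self ht) θ₀ (hAΘ hθ₀)) (hApos θ₀ hθ₀)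
  refine ⟨_, half_pos hpos, ?_⟩
  filter_upwards [Metric.tendstoUniformlyOn_iff.1 hlim _ (half_pos hpos)] with n hn θ hθ
  have hclose := hn θ (hAΘ hθ)
  rw [Real.dist_eq, abs_lt] at hclose
  linarith [isMinOn_iff.1 hmin θ hθ, hclose.2]

lemma ContinuousOn.sub_of_mem (hu : ContinuousOn (fun q : ℝ × E => u q.1 q.2) (Icc 0 1 ×ˢ Θ))
    {θ₀ : E} (hθ₀ : θ₀ ∈ Θ) :
    ContinuousOn (fun q : ℝ × E => u q.1 θ₀ - u q.1 q.2) (Icc 0 1 ×ˢ Θ) :=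
  (hu.comp (continuous_fst.prodMk continuous_const).continuousOn
    fun _ hq => ⟨hq.1, hθ₀⟩).sub hu

theorem exists_pos_eventually_le_riemannSum_sq_sub (hΘ : IsCompact Θ)
    (hu : ContinuousOn (fun q : ℝ × E => u q.1 q.2) (Icc 0 1 ×ˢ Θ)) {θ₀ : E} (hθ₀ : θ₀ ∈ Θ)
    (hid : ∀ θ ∈ Θ, (∀ t ∈ Icc (0 : ℝ) 1, u t θ = u t θ₀) → θ = θ₀) {r : ℝ} (hr : 0 < r) :
    ∃ c > 0, ∀ᶠ n : ℕ in atTop, ∀ θ ∈ Θ, r ≤ dist θ θ₀ →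
      c ≤ (n : ℝ)⁻¹ * ∑ k ∈ Finset.Icc 1 n, (u (k / n) θ₀ - u (k / n) θ) ^ 2 := by
  have hpos : ∀ θ ∈ Θ ∩ {θ | r ≤ dist θ θ₀}, ∃ t ∈ Icc (0 : ℝ) 1, 0 < (u t θ₀ - u t θ) ^ 2 := by
    rintro θ ⟨hθ, hrθ⟩
    by_contra! hzero
    have hθθ₀ := hid θ hθ fun t ht => (sub_eq_zero.1 <| pow_eq_zero_iff two_ne_zero |>.1 <|
      le_antisymm (hzero t ht) (sq_nonneg _)).symm
    exact hr.not_ge (by simpa [hθθ₀] using hrθ)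
  obtain ⟨c, hc, hsep⟩ := exists_pos_eventually_le_riemannSum hΘ ((hu.sub_of_mem hθ₀).pow 2)
    (fun _ _ _ _ => sq_nonneg _)
    (hΘ.inter_right (isClosed_le continuous_const (continuous_id.dist continuous_const)))
    inter_subset_left hpos
  exact ⟨c, hc, hsep.mono fun n hn θ hθ hrθ => hn θ ⟨hθ, hrθ⟩⟩

end RiemannSums

section UncorrelatedSums

variable {Ω ι : Type*} [MeasurableSpace Ω] {P : Measure Ω} {s : Finset ι} {X : ι → Ω → ℝ}

lemma variance_fun_sum_of_covariance_eq_zero [IsFiniteMeasure P]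
    (hX : ∀ i ∈ s, MemLp (X i) 2 P) (hcov : ∀ i ∈ s, ∀ j ∈ s, i ≠ j → cov[X i, X j; P] = 0) :
    Var[fun ω => ∑ i ∈ s, X i ω; P] = ∑ i ∈ s, Var[X i; P] := by
  rw [variance_fun_sum' hX]
  refine Finset.sum_congr rfl fun i hi => ?_
  rw [Finset.sum_eq_single_of_mem i hi fun j hj hji => hcov i hi j hj hji.symm,
    covariance_self (hX i hi).aemeasurable]

lemma measure_le_abs_sum_mul_le [IsFiniteMeasure P] (c : ι → ℝ) (hX : ∀ i ∈ s, MemLp (X i) 2 P)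
    (hX0 : ∀ i ∈ s, P[X i] = 0) (hcov : ∀ i ∈ s, ∀ j ∈ s, i ≠ j → cov[X i, X j; P] = 0)
    {a : ℝ} (ha : 0 < a) :
    P {ω | a ≤ |∑ i ∈ s, c i * X i ω|}
      ≤ ENNReal.ofReal ((∑ i ∈ s, c i ^ 2 * Var[X i; P]) / a ^ 2) := by
  have hcX : ∀ i ∈ s, MemLp (fun ω => c i * X i ω) 2 P := fun i hi => (hX i hi).const_mul (c i)
  have hmean : P[fun ω => ∑ i ∈ s, c i * X i ω] = 0 := by
    rw [integral_finsetSum _ fun i hi => (hcX i hi).integrable one_le_two]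
    exact Finset.sum_eq_zero fun i hi => by rw [integral_const_mul, hX0 i hi, mul_zero]
  have hvar : Var[fun ω => ∑ i ∈ s, c i * X i ω; P] = ∑ i ∈ s, c i ^ 2 * Var[X i; P] := by
    rw [variance_fun_sum_of_covariance_eq_zero hcX fun i hi j hj hij => by
      rw [covariance_const_mul_left, covariance_const_mul_right, hcov i hi j hj hij, mul_zero,
        mul_zero]]
    exact Finset.sum_congr rfl fun i _ => variance_const_mul _ _ _
  simpa [hmean, hvar] using meas_ge_le_variance_div_sq (memLp_finsetSum s hcX) ha

lemma measure_le_sum_abs_le [IsProbabilityMeasure P] (hX : ∀ i ∈ s, MemLp (X i) 2 P)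
    (hX0 : ∀ i ∈ s, P[X i] = 0) {a : ℝ} (ha : 0 < a) :
    P {ω | a ≤ ∑ i ∈ s, |X i ω|} ≤ ENNReal.ofReal ((∑ i ∈ s, (1 + Var[X i; P])) / a) := by
  have hint : ∀ i ∈ s, Integrable (fun ω => |X i ω|) P := fun i hi =>
    ((hX i hi).integrable one_le_two).abs
  have hmarkov := mul_meas_ge_le_integral_of_nonneg
    (Eventually.of_forall fun ω => Finset.sum_nonneg fun i _ => abs_nonneg (X i ω))
    (integrable_finsetSum _ hint) a
  rw [← ofReal_measureReal]
  refine ENNReal.ofReal_le_ofReal ((le_div_iff₀' ha).2 (hmarkov.trans ?_))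
  rw [integral_finsetSum _ hint]
  refine Finset.sum_le_sum fun i hi => ?_
  have hsq := (hX i hi).integrable_sq
  rw [variance_of_integral_eq_zero (hX i hi).aemeasurable (hX0 i hi)]
  calc ∫ ω, |X i ω| ∂P ≤ ∫ ω, (1 + X i ω ^ 2) ∂P :=
        integral_mono (hint i hi) ((integrable_const 1).add hsq) fun ω => by
          nlinarith [abs_nonneg (X i ω), sq_abs (X i ω)]
    _ = 1 + ∫ ω, X i ω ^ 2 ∂P := by
        rw [integral_add (integrable_const 1) hsq, integral_const, probReal_univ, one_smul]

end UncorrelatedSums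

lemma abs_sum_mul_le_abs_sum_mul_add {ι : Type*} (s : Finset ι) {a b w : ι → ℝ} {ρ : ℝ}
    (hab : ∀ i ∈ s, |a i - b i| ≤ ρ) :
    |∑ i ∈ s, a i * w i| ≤ |∑ i ∈ s, b i * w i| + ρ * ∑ i ∈ s, |w i| := by
  have hsplit : ∑ i ∈ s, a i * w i = ∑ i ∈ s, b i * w i + ∑ i ∈ s, (a i - b i) * w i := by
    rw [← Finset.sum_add_distrib]; exact Finset.sum_congr rfl fun i _ => by ring
  have hrest : |∑ i ∈ s, (a i - b i) * w i| ≤ ρ * ∑ i ∈ s, |w i| := by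
    rw [Finset.mul_sum]
    refine (Finset.abs_sum_le_sum_abs _ _).trans (Finset.sum_le_sum fun i hi => ?_)
    rw [abs_mul]
    exact mul_le_mul_of_nonneg_right (hab i hi) (abs_nonneg _)
  rw [hsplit]
  exact (abs_add_le _ _).trans (by gcongr)

lemma mul_sum_sq_le_two_mul_abs_of_mul_sum_add_sq_le {ι : Type*} (s : Finset ι) (c : ℝ)
    {a w : ι → ℝ} (h : c * ∑ i ∈ s, (w i + a i) ^ 2 ≤ c * ∑ i ∈ s, w i ^ 2) :
    c * ∑ i ∈ s, a i ^ 2 ≤ 2 * |c * ∑ i ∈ s, a i * w i| := by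
  have hexp : ∑ i ∈ s, (w i + a i) ^ 2
      = ∑ i ∈ s, w i ^ 2 + 2 * ∑ i ∈ s, a i * w i + ∑ i ∈ s, a i ^ 2 := by
    rw [Finset.mul_sum, ← Finset.sum_add_distrib, ← Finset.sum_add_distrib]
    exact Finset.sum_congr rfl fun i _ => by ring
  rw [hexp, mul_add, mul_add, mul_left_comm] at h
  linarith [neg_abs_le (c * ∑ i ∈ s, a i * w i)]

section TriangularArrays

variable {Ω : Type*} [MeasurableSpace Ω] {P : Measure Ω} {B : ℝ} {W : ℕ → ℕ → Ω → ℝ}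

structure IsCenteredUncorrelatedArray (P : Measure Ω) (B : ℝ) (W : ℕ → ℕ → Ω → ℝ) : Prop where
  memLp : ∀ n, ∀ k ∈ Finset.Icc 1 n, MemLp (W n k) 2 P
  integral_eq_zero : ∀ n, ∀ k ∈ Finset.Icc 1 n, P[W n k] = 0
  covariance_eq_zero :
    ∀ n, ∀ k ∈ Finset.Icc 1 n, ∀ l ∈ Finset.Icc 1 n, k ≠ l → cov[W n k, W n l; P] = 0
  variance_le : ∀ n, ∀ k ∈ Finset.Icc 1 n, Var[W n k; P] ≤ B

variable [IsProbabilityMeasure P]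

lemma IsCenteredUncorrelatedArray.measure_le_abs_avg_mul_le
    (hW : IsCenteredUncorrelatedArray P B W) {n : ℕ} (hn : 0 < n) {h : ℝ → ℝ} {C : ℝ}
    (hC : ∀ t ∈ Icc (0 : ℝ) 1, |h t| ≤ C) {a : ℝ} (ha : 0 < a) :
    P {ω | a ≤ |(n : ℝ)⁻¹ * ∑ k ∈ Finset.Icc 1 n, h (k / n) * W n k ω|}
      ≤ ENNReal.ofReal (C ^ 2 * B / (n * a ^ 2)) := by
  simp_rw [Finset.mul_sum, ← mul_assoc]
  refine (measure_le_abs_sum_mul_le _ (hW.memLp n) (hW.integral_eq_zero n)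
    (hW.covariance_eq_zero n) ha).trans (ENNReal.ofReal_le_ofReal ?_)
  have hterm : ∀ k ∈ Finset.Icc 1 n, ((n : ℝ)⁻¹ * h (k / n)) ^ 2 * Var[W n k; P]
      ≤ (n : ℝ)⁻¹ ^ 2 * (C ^ 2 * B) := by
    intro k hk
    obtain ⟨hlo, hhi⟩ := abs_le.1 (hC _ (natCast_div_mem_Icc hk))
    have hsq : h (k / n) ^ 2 ≤ C ^ 2 := sq_le_sq' hlo hhi
    calc ((n : ℝ)⁻¹ * h (k / n)) ^ 2 * Var[W n k; P]
        ≤ (n : ℝ)⁻¹ ^ 2 * C ^ 2 * Var[W n k; P] := by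
          rw [mul_pow]; gcongr; exact variance_nonneg _ _
      _ ≤ (n : ℝ)⁻¹ ^ 2 * (C ^ 2 * B) := by
          rw [mul_assoc]; gcongr; exact hW.variance_le n k hk
  calc (∑ k ∈ Finset.Icc 1 n, ((n : ℝ)⁻¹ * h (k / n)) ^ 2 * Var[W n k; P]) / a ^ 2
      ≤ (n * ((n : ℝ)⁻¹ ^ 2 * (C ^ 2 * B))) / a ^ 2 := by
        gcongr
        refine (Finset.sum_le_sum hterm).trans_eq ?_
        rw [Finset.sum_const, Nat.card_Icc, Nat.add_sub_cancel, nsmul_eq_mul]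
    _ = C ^ 2 * B / (n * a ^ 2) := by field_simp

lemma IsCenteredUncorrelatedArray.measure_le_avg_abs_le
    (hW : IsCenteredUncorrelatedArray P B W) {n : ℕ} (hn : 0 < n) {a : ℝ} (ha : 0 < a) :
    P {ω | a ≤ (n : ℝ)⁻¹ * ∑ k ∈ Finset.Icc 1 n, |W n k ω|} ≤ ENNReal.ofReal ((1 + B) / a) := by
  have hn' : (0 : ℝ) < n := by exact_mod_cast hn
  have hset : {ω | a ≤ (n : ℝ)⁻¹ * ∑ k ∈ Finset.Icc 1 n, |W n k ω|}
      = {ω | n * a ≤ ∑ k ∈ Finset.Icc 1 n, |W n k ω|} := by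
    ext ω; exact le_inv_mul_iff₀ hn'
  rw [hset]
  refine (measure_le_sum_abs_le (hW.memLp n) (hW.integral_eq_zero n) (by positivity)).trans
    (ENNReal.ofReal_le_ofReal ?_)
  calc (∑ k ∈ Finset.Icc 1 n, (1 + Var[W n k; P])) / (n * a)
      ≤ (n * (1 + B)) / (n * a) := by
        gcongr
        refine (Finset.sum_le_sum fun k hk => by grw [hW.variance_le n k hk]).trans_eq ?_
        rw [Finset.sum_const, Nat.card_Icc, Nat.add_sub_cancel, nsmul_eq_mul]
    _ = (1 + B) / a := by field_simp

end TriangularArrays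

section EmpiricalProcess

variable {Ω E : Type*} {Θ : Set E} {h : ℝ → E → ℝ}

lemma setOf_exists_le_abs_avg_subset {W : ℕ → Ω → ℝ} {s : Finset E} {ρ η : ℝ} (hρ : 0 < ρ)
    (hnet : ∀ θ ∈ Θ, ∃ θ' ∈ s, ∀ t ∈ Icc (0 : ℝ) 1, |h t θ - h t θ'| ≤ ρ) (n : ℕ) :
    {ω | ∃ θ ∈ Θ, η ≤ |(n : ℝ)⁻¹ * ∑ k ∈ Finset.Icc 1 n, h (k / n) θ * W k ω|}
      ⊆ (⋃ θ' ∈ s, {ω | η / 2 ≤ |(n : ℝ)⁻¹ * ∑ k ∈ Finset.Icc 1 n, h (k / n) θ' * W k ω|})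
        ∪ {ω | η / (2 * ρ) ≤ (n : ℝ)⁻¹ * ∑ k ∈ Finset.Icc 1 n, |W k ω|} := by
  rintro ω ⟨θ, hθ, hηθ⟩
  obtain ⟨θ', hθ', hclose⟩ := hnet θ hθ
  have hsplit := abs_sum_mul_le_abs_sum_mul_add (Finset.Icc 1 n) (w := fun k => W k ω)
    fun k hk => hclose _ (natCast_div_mem_Icc hk)
  have hn : (0 : ℝ) ≤ (n : ℝ)⁻¹ := by positivity
  rw [abs_mul, abs_of_nonneg hn] at hηθ
  by_cases hfar : η / 2 ≤ |(n : ℝ)⁻¹ * ∑ k ∈ Finset.Icc 1 n, h (k / n) θ' * W k ω|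
  · exact Or.inl (mem_biUnion hθ' hfar)
  · right
    rw [abs_mul, abs_of_nonneg hn, not_le] at hfar
    show η / (2 * ρ) ≤ _
    rw [div_le_iff₀ (by positivity)]
    nlinarith [mul_le_mul_of_nonneg_left hsplit hn]

variable [PseudoMetricSpace E]

lemma exists_finset_forall_abs_sub_le (hΘ : IsCompact Θ)
    (hh : ContinuousOn (fun q : ℝ × E => h q.1 q.2) (Icc 0 1 ×ˢ Θ)) {ρ : ℝ} (hρ : 0 < ρ) :
    ∃ s : Finset E, (∀ θ' ∈ s, θ' ∈ Θ) ∧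
      ∀ θ ∈ Θ, ∃ θ' ∈ s, ∀ t ∈ Icc (0 : ℝ) 1, |h t θ - h t θ'| ≤ ρ := by
  obtain ⟨δ, hδ, hmod⟩ := hh.exists_pos_forall_abs_sub_lt hΘ hρ
  obtain ⟨s, hsΘ, hcover⟩ :=
    hΘ.elim_nhds_subcover (Metric.ball · δ) fun θ _ => Metric.ball_mem_nhds θ hδ
  refine ⟨s, hsΘ, fun θ hθ => ?_⟩
  obtain ⟨θ', hθ', hball⟩ := mem_iUnion₂.1 (hcover hθ)
  exact ⟨θ', hθ', fun t ht => (hmod t ht t ht θ hθ θ' (hsΘ θ' hθ') (by simpa using hδ) hball).le⟩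

variable [MeasurableSpace Ω] {P : Measure Ω} [IsProbabilityMeasure P]

theorem IsCenteredUncorrelatedArray.tendsto_measure_exists_le_abs_avg_mul {W : ℕ → ℕ → Ω → ℝ}
    {B : ℝ} (hW : IsCenteredUncorrelatedArray P B W) (hΘ : IsCompact Θ)
    (hh : ContinuousOn (fun q : ℝ × E => h q.1 q.2) (Icc 0 1 ×ˢ Θ)) {η : ℝ} (hη : 0 < η) :
    Tendsto (fun n : ℕ => P {ω | ∃ θ ∈ Θ,
      η ≤ |(n : ℝ)⁻¹ * ∑ k ∈ Finset.Icc 1 n, h (k / n) θ * W n k ω|}) atTop (𝓝 0) := by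
  obtain ⟨C, hC⟩ := (isCompact_Icc.prod hΘ).exists_bound_of_continuousOn hh
  refine ENNReal.tendsto_nhds_zero.2 fun ε hε => ?_
  obtain ⟨e, -, he, heε⟩ := ENNReal.lt_iff_exists_real_btwn.1 hε
  rw [ENNReal.ofReal_pos] at he
  -- the net scale `ρ` makes the Markov term `2ρ(1 + B)/η` at most `e / 2`
  set ρ := e * η / (4 * (1 + |B|))
  have hρ : 0 < ρ := by positivity
  obtain ⟨s, hsΘ, hnet⟩ := exists_finset_forall_abs_sub_le hΘ hh hρ
  set D := s.card * (C ^ 2 * B / (η / 2) ^ 2)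
  filter_upwards [eventually_gt_atTop 0, (tendsto_const_div_atTop_nhds_zero_nat D).eventually
    (eventually_le_nhds (half_pos he))] with n hn hnD
  have hcheb : ∀ θ' ∈ s, P {ω | η / 2 ≤ |(n : ℝ)⁻¹ * ∑ k ∈ Finset.Icc 1 n, h (k / n) θ' * W n k ω|}
      ≤ ENNReal.ofReal (C ^ 2 * B / (n * (η / 2) ^ 2)) := fun θ' hθ' =>
    hW.measure_le_abs_avg_mul_le (h := fun t => h t θ') hn
      (fun t ht => by simpa using hC (t, θ') ⟨ht, hsΘ θ' hθ'⟩) (half_pos hη)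
  calc _ ≤ P ((⋃ θ' ∈ s, {ω | η / 2 ≤ |(n : ℝ)⁻¹ * ∑ k ∈ Finset.Icc 1 n, h (k / n) θ' * W n k ω|})
          ∪ {ω | η / (2 * ρ) ≤ (n : ℝ)⁻¹ * ∑ k ∈ Finset.Icc 1 n, |W n k ω|}) :=
        measure_mono (setOf_exists_le_abs_avg_subset hρ hnet n)
    _ ≤ ∑ θ' ∈ s, ENNReal.ofReal (C ^ 2 * B / (n * (η / 2) ^ 2))
          + ENNReal.ofReal ((1 + B) / (η / (2 * ρ))) :=
        (measure_union_le _ _).trans <| add_le_add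
          ((measure_biUnion_finset_le _ _).trans (Finset.sum_le_sum hcheb))
          (hW.measure_le_avg_abs_le hn (by positivity))
    _ ≤ ENNReal.ofReal (e / 2) + ENNReal.ofReal (e / 2) := by
        refine add_le_add ?_ ?_
        · rw [Finset.sum_const, nsmul_eq_mul, ← ENNReal.ofReal_natCast,
            ← ENNReal.ofReal_mul (Nat.cast_nonneg _)]
          refine ENNReal.ofReal_le_ofReal (le_of_eq_of_le ?_ hnD)
          simp only [D]
          field_simp
        · refine ENNReal.ofReal_le_ofReal ?_
          calc (1 + B) / (η / (2 * ρ)) = 2 * ρ * (1 + B) / η := by field_simp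
            _ ≤ 2 * ρ * (1 + |B|) / η := by gcongr; exact le_abs_self B
            _ = e / 2 := by simp only [ρ]; field_simp; ring
    _ = ENNReal.ofReal e := by
        rw [← ENNReal.ofReal_add (half_pos he).le (half_pos he).le, add_halves]
    _ ≤ ε := heε.le

end EmpiricalProcess

section Noise

variable {Ω D : Type*} [MeasurableSpace Ω] [MeasurableSpace D] {P : Measure Ω}
  {ε : ℕ → Ω → D} {V : ℕ → Ω → ℝ}

lemma ProbabilityTheory.IndepFun.comp_eval
    (hεV : IndepFun (fun ω k => ε k ω) (fun ω k => V k ω) P) {f : D → ℝ} (hf : Measurable f)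
    (k l : ℕ) : IndepFun (fun ω => f (ε k ω)) (V l) P :=
  hεV.comp (hf.comp (measurable_pi_apply k)) (measurable_pi_apply l)

lemma covariance_comp_add_comp_add_eq_zero [IsFiniteMeasure P] (hε : iIndepFun ε P)
    (hV : iIndepFun V P)
    (hεV : IndepFun (fun ω k => ε k ω) (fun ω k => V k ω) P) {f g : D → ℝ} (hf : Measurable f)
    (hg : Measurable g) {k l : ℕ} (hkl : k ≠ l) (hfk : MemLp (fun ω => f (ε k ω)) 2 P)
    (hgl : MemLp (fun ω => g (ε l ω)) 2 P) (hVk : MemLp (V k) 2 P) (hVl : MemLp (V l) 2 P) :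
    cov[fun ω => f (ε k ω) + V k ω, fun ω => g (ε l ω) + V l ω; P] = 0 := by
  have hεε : cov[fun ω => f (ε k ω), fun ω => g (ε l ω); P] = 0 :=
    ((hε.indepFun hkl).comp hf hg).covariance_eq_zero hfk hgl
  have hεV' : cov[fun ω => f (ε k ω), V l; P] = 0 :=
    (hεV.comp_eval hf k l).covariance_eq_zero hfk hVl
  have hVε : cov[V k, fun ω => g (ε l ω); P] = 0 :=
    (hεV.comp_eval hg l k).symm.covariance_eq_zero hVk hgl
  change cov[(fun ω => f (ε k ω)) + V k, (fun ω => g (ε l ω)) + V l; P] = 0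
  rw [covariance_add_left hfk hVk (hgl.add hVl), covariance_add_right hfk hgl hVl,
    covariance_add_right hVk hgl hVl, hεε, hεV', hVε,
    (hV.indepFun hkl).covariance_eq_zero hVk hVl]
  norm_num

theorem isCenteredUncorrelatedArray_comp_add [IsFiniteMeasure P] (hε : iIndepFun ε P)
    (hV : iIndepFun V P) (hεV : IndepFun (fun ω k => ε k ω) (fun ω k => V k ω) P)
    (hεid : ∀ k, IdentDistrib (ε k) (ε 1) P P) (hVid : ∀ k, IdentDistrib (V k) (V 1) P P)
    {ψ : ℝ → D → ℝ} (hψ : ∀ t, Measurable (ψ t))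
    (hψ2 : ∀ t ∈ Icc (0 : ℝ) 1, MemLp (fun ω => ψ t (ε 1 ω)) 2 P)
    (hψ0 : ∀ t ∈ Icc (0 : ℝ) 1, ∫ ω, ψ t (ε 1 ω) ∂P = 0) {B : ℝ}
    (hψvar : ∀ t ∈ Icc (0 : ℝ) 1, Var[fun ω => ψ t (ε 1 ω); P] ≤ B) (hV2 : MemLp (V 1) 2 P)
    (hV0 : ∫ ω, V 1 ω ∂P = 0) :
    IsCenteredUncorrelatedArray P (B + Var[V 1; P]) fun n k ω => ψ (k / n) (ε k ω) + V k ω := by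
  have hψid : ∀ t k, IdentDistrib (fun ω => ψ t (ε k ω)) (fun ω => ψ t (ε 1 ω)) P P :=
    fun t k => (hεid k).comp (hψ t)
  have hψ2' : ∀ n : ℕ, ∀ k ∈ Finset.Icc 1 n, MemLp (fun ω => ψ (k / n) (ε k ω)) 2 P :=
    fun n k hk => (hψid _ k).memLp_iff.2 (hψ2 _ (natCast_div_mem_Icc hk))
  have hV2' : ∀ k, MemLp (V k) 2 P := fun k => (hVid k).memLp_iff.2 hV2
  refine ⟨fun n k hk => (hψ2' n k hk).add (hV2' k), fun n k hk => ?_,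
    fun n k hk l hl hkl => covariance_comp_add_comp_add_eq_zero hε hV hεV (hψ _) (hψ _) hkl
      (hψ2' n k hk) (hψ2' n l hl) (hV2' k) (hV2' l), fun n k hk => ?_⟩
  · rw [integral_add ((hψ2' n k hk).integrable one_le_two) ((hV2' k).integrable one_le_two),
      (hψid _ k).integral_eq, (hVid k).integral_eq, hψ0 _ (natCast_div_mem_Icc hk), hV0,
      add_zero]
  · rw [(hεV.comp_eval (hψ _) k k).variance_fun_add (hψ2' n k hk) (hV2' k),
      (hψid _ k).variance_eq, (hVid k).variance_eq]
    exact add_le_add_left (hψvar _ (natCast_div_mem_Icc hk)) _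

theorem isCenteredUncorrelatedArray_comp_sub_add [IsProbabilityMeasure P] (hε : iIndepFun ε P)
    (hV : iIndepFun V P) (hεV : IndepFun (fun ω k => ε k ω) (fun ω k => V k ω) P)
    (hεid : ∀ k, IdentDistrib (ε k) (ε 1) P P) (hVid : ∀ k, IdentDistrib (V k) (V 1) P P)
    {ψ : ℝ → D → ℝ} {m : ℝ → ℝ} (hψ : ∀ t, Measurable (ψ t))
    (hψ2 : ∀ t ∈ Icc (0 : ℝ) 1, Integrable (fun ω => ψ t (ε 1 ω) ^ 2) P)
    (hψm : ∀ t ∈ Icc (0 : ℝ) 1, ∫ ω, ψ t (ε 1 ω) ∂P = m t) {B : ℝ}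
    (hψB : ∀ t ∈ Icc (0 : ℝ) 1, ∫ ω, ψ t (ε 1 ω) ^ 2 ∂P ≤ B)
    (hV2 : Integrable (fun ω => V 1 ω ^ 2) P) (hV0 : ∫ ω, V 1 ω ∂P = 0) :
    IsCenteredUncorrelatedArray P (B + Var[V 1; P])
      fun n k ω => ψ (k / n) (ε k ω) - m (k / n) + V k ω := by
  have hψ2' : ∀ t ∈ Icc (0 : ℝ) 1, MemLp (fun ω => ψ t (ε 1 ω)) 2 P := fun t ht =>
    (memLp_two_iff_integrable_sq ((hψ t).comp_aemeasurable
      (hεid 1).aemeasurable_fst).aestronglyMeasurable).2 (hψ2 t ht)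
  refine isCenteredUncorrelatedArray_comp_add hε hV hεV hεid hVid (ψ := fun t x => ψ t x - m t)
    (fun t => (hψ t).sub_const _) (fun t ht => (hψ2' t ht).sub (memLp_const (m t)))
    (fun t ht => ?_) (fun t ht => ?_)
    ((memLp_two_iff_integrable_sq (hVid 1).aemeasurable_fst.aestronglyMeasurable).2 hV2) hV0
  · rw [integral_sub ((hψ2' t ht).integrable one_le_two) (integrable_const _), hψm t ht,
      integral_const, probReal_univ, one_smul, sub_self]
  · rw [variance_sub_const (hψ2' t ht).aestronglyMeasurable]
    exact (variance_le_expectation_sq (hψ2' t ht).aestronglyMeasurable).trans (hψB t ht)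

end Noise

theorem stmt_3_general
    {Ω : Type*} [MeasurableSpace Ω] (P : Measure Ω) [IsProbabilityMeasure P]
    {m d : ℕ}
    (Θ : Set (EuclideanSpace ℝ (Fin m))) (hΘ : IsCompact Θ)
    (θstar : EuclideanSpace ℝ (Fin m)) (hθstar : θstar ∈ Θ)
    (S : ℝ → EuclideanSpace ℝ (Fin m) → EuclideanSpace ℝ (Fin d))
    (Ψ : EuclideanSpace ℝ (Fin d) → ℝ → ℝ)
    (hΨmeas : Measurable (fun q : EuclideanSpace ℝ (Fin d) × ℝ => Ψ q.1 q.2))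
    -- trajectory noise: i.i.d. sequence (Assumption (IID))
    (ε : ℕ → Ω → EuclideanSpace ℝ (Fin d))
    (hεmeas : ∀ k, Measurable (ε k))
    (hεindep : iIndepFun ε P)
    (hεident : ∀ k, Measure.map (ε k) P = Measure.map (ε 1) P)
    -- observation noise: i.i.d. centered with variance σ², independent of (ε_k)
    (V : ℕ → Ω → ℝ)
    (hVmeas : ∀ k, Measurable (V k))
    (hVindep : iIndepFun V P)
    (hVident : ∀ k, Measure.map (V k) P = Measure.map (V 1) P)
    (hVcent : ∫ ω, V 1 ω ∂P = 0)
    (hVsq : Integrable (fun ω => (V 1 ω)^2) P)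
    (hindepεV : IndepFun (fun ω (k : ℕ) => ε k ω) (fun ω (k : ℕ) => V k ω) P)
    -- least squares criterion
    (Mn : ℕ → Ω → EuclideanSpace ℝ (Fin m) → ℝ)
    (hMn : ∀ (n : ℕ) ω θ, Mn n ω θ = (n:ℝ)⁻¹ * ∑ k ∈ Finset.Icc 1 n,
      (Ψ (S ((k:ℝ)/(n:ℝ)) θstar + ε k ω) ((k:ℝ)/(n:ℝ)) + V k ω
        - Ψ (S ((k:ℝ)/(n:ℝ)) θ) ((k:ℝ)/(n:ℝ)))^2)
    -- Assumption (Obs)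
    (hObs : ∀ θ ∈ Θ, (∀ t ∈ Set.Icc (0:ℝ) 1, Ψ (S t θ) t = Ψ (S t θstar) t) → θ = θstar)
    -- Assumption (Esp)
    (hEsp : ∀ t ∈ Set.Icc (0:ℝ) 1, ∀ θ ∈ Θ,
      ∫ ω, Ψ (S t θ + ε 1 ω) t ∂P = Ψ (S t θ) t)
    -- Assumption (Cont)
    (hC1a : ∀ t ∈ Set.Icc (0:ℝ) 1,
      Integrable (fun ω => (Ψ (S t θstar + ε 1 ω) t)^2) P)
    (hC1b : ContinuousOn (fun t => ∫ ω, (Ψ (S t θstar + ε 1 ω) t)^2 ∂P)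
      (Set.Icc (0:ℝ) 1))
    (hC3 : ContinuousOn (fun q : ℝ × EuclideanSpace ℝ (Fin m) => Ψ (S q.1 q.2) q.1)
      (Set.Icc (0:ℝ) 1 ×ˢ Θ))
    -- the least squares estimator: any measurable minimizer of `M_n` over `Θ`
    (θbar : ℕ → Ω → EuclideanSpace ℝ (Fin m))
    (hθbarmem : ∀ n ω, θbar n ω ∈ Θ)
    (hθbarmin : ∀ n ω, ∀ θ ∈ Θ, Mn n ω (θbar n ω) ≤ Mn n ω θ) :
    TendstoInMeasure P (fun n ω => θbar n ω) atTop (fun _ => θstar) := by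
  set g : ℝ → EuclideanSpace ℝ (Fin m) → ℝ := fun t θ => Ψ (S t θ) t
  obtain ⟨B, hB⟩ := isCompact_Icc.exists_bound_of_continuousOn hC1b
  have hW := isCenteredUncorrelatedArray_comp_sub_add hεindep hVindep hindepεV
    (fun k => ⟨(hεmeas k).aemeasurable, (hεmeas 1).aemeasurable, hεident k⟩)
    (fun k => ⟨(hVmeas k).aemeasurable, (hVmeas 1).aemeasurable, hVident k⟩)
    (ψ := fun t x => Ψ (S t θstar + x) t) (m := fun t => g t θstar)
    (fun t => hΨmeas.comp ((measurable_const_add _).prodMk measurable_const)) hC1a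
    (fun t ht => hEsp t ht θstar hθstar) (fun t ht => (Real.le_norm_self _).trans (hB t ht))
    hVsq hVcent
  rw [tendstoInMeasure_iff_dist]
  intro r hr
  obtain ⟨c, hc, hsep⟩ := exists_pos_eventually_le_riemannSum_sq_sub hΘ (u := g) hC3 hθstar hObs hr
  refine tendsto_of_tendsto_of_tendsto_of_le_of_le' tendsto_const_nhds
    (hW.tendsto_measure_exists_le_abs_avg_mul (h := fun t θ => g t θstar - g t θ) hΘ
      (hC3.sub_of_mem (u := g) hθstar) (half_pos hc))
    (Eventually.of_forall fun _ => zero_le) ?_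
  filter_upwards [hsep] with n hn
  refine measure_mono fun ω hω => ⟨θbar n ω, hθbarmem n ω, ?_⟩
  have hmin := hθbarmin n ω θstar hθstar
  rw [hMn, hMn] at hmin
  have hbasic := mul_sum_sq_le_two_mul_abs_of_mul_sum_add_sq_le (Finset.Icc 1 n) (n : ℝ)⁻¹
    (a := fun k => g (k / n) θstar - g (k / n) (θbar n ω))
    (w := fun k => Ψ (S (k / n) θstar + ε k ω) (k / n) - g (k / n) θstar + V k ω) (by
      convert hmin using 3 <;> (simp only [g]; ring))
  linarith [hn _ (hθbarmem n ω) hω]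

/-- Under assumptions (IID), (Obs), (Esp) and (Cont), any measurable minimizer
`θ̄_n` of the least squares criterion `M_n` over the compact parameter set `Θ` converges in
probability to the true parameter `θ*`. -/
theorem stmt_3
    {Ω : Type*} [MeasurableSpace Ω] (P : Measure Ω) [IsProbabilityMeasure P]
    {m d : ℕ}
    (Θ : Set (EuclideanSpace ℝ (Fin m))) (hΘ : IsCompact Θ)
    (θstar : EuclideanSpace ℝ (Fin m)) (hθstar : θstar ∈ Θ)
    (S : ℝ → EuclideanSpace ℝ (Fin m) → EuclideanSpace ℝ (Fin d))
    (Ψ : EuclideanSpace ℝ (Fin d) → ℝ → ℝ)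
    (hSmeas : Measurable (fun q : ℝ × EuclideanSpace ℝ (Fin m) => S q.1 q.2))
    (hΨmeas : Measurable (fun q : EuclideanSpace ℝ (Fin d) × ℝ => Ψ q.1 q.2))
    -- trajectory noise: i.i.d. sequence (Assumption (IID))
    (ε : ℕ → Ω → EuclideanSpace ℝ (Fin d))
    (hεmeas : ∀ k, Measurable (ε k))
    (hεindep : iIndepFun ε P)
    (hεident : ∀ k, Measure.map (ε k) P = Measure.map (ε 1) P)
    -- observation noise: i.i.d. centered with variance σ², independent of (ε_k)
    (V : ℕ → Ω → ℝ) (σ2 : ℝ)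
    (hVmeas : ∀ k, Measurable (V k))
    (hVindep : iIndepFun V P)
    (hVident : ∀ k, Measure.map (V k) P = Measure.map (V 1) P)
    (hVint : Integrable (V 1) P) (hVcent : ∫ ω, V 1 ω ∂P = 0)
    (hVsq : Integrable (fun ω => (V 1 ω)^2) P) (hVvar : ∫ ω, (V 1 ω)^2 ∂P = σ2)
    (hindepεV : IndepFun (fun ω (k : ℕ) => ε k ω) (fun ω (k : ℕ) => V k ω) P)
    -- least squares criterion
    (Mn : ℕ → Ω → EuclideanSpace ℝ (Fin m) → ℝ)
    (hMn : ∀ (n : ℕ) ω θ, Mn n ω θ = (n:ℝ)⁻¹ * ∑ k ∈ Finset.Icc 1 n,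
      (Ψ (S ((k:ℝ)/(n:ℝ)) θstar + ε k ω) ((k:ℝ)/(n:ℝ)) + V k ω
        - Ψ (S ((k:ℝ)/(n:ℝ)) θ) ((k:ℝ)/(n:ℝ)))^2)
    -- Assumption (Obs)
    (hObs : ∀ θ ∈ Θ, (∀ t ∈ Set.Icc (0:ℝ) 1, Ψ (S t θ) t = Ψ (S t θstar) t) → θ = θstar)
    -- Assumption (Esp)
    (hEspInt : ∀ t ∈ Set.Icc (0:ℝ) 1, ∀ θ ∈ Θ,
      Integrable (fun ω => Ψ (S t θ + ε 1 ω) t) P)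
    (hEsp : ∀ t ∈ Set.Icc (0:ℝ) 1, ∀ θ ∈ Θ,
      ∫ ω, Ψ (S t θ + ε 1 ω) t ∂P = Ψ (S t θ) t)
    -- Assumption (Cont)
    (hC1a : ∀ t ∈ Set.Icc (0:ℝ) 1,
      Integrable (fun ω => (Ψ (S t θstar + ε 1 ω) t)^2) P)
    (hC1b : ContinuousOn (fun t => ∫ ω, (Ψ (S t θstar + ε 1 ω) t)^2 ∂P)
      (Set.Icc (0:ℝ) 1))
    (hC2 : ∀ δ > (0:ℝ), ∃ M0 : ℝ, ∀ t ∈ Set.Icc (0:ℝ) 1,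
      ∫ ω in {ω | M0 < (Ψ (S t θstar + ε 1 ω) t)^2}, (Ψ (S t θstar + ε 1 ω) t)^2 ∂P ≤ δ)
    (hC3 : ContinuousOn (fun q : ℝ × EuclideanSpace ℝ (Fin m) => Ψ (S q.1 q.2) q.1)
      (Set.Icc (0:ℝ) 1 ×ˢ Θ))
    -- the least squares estimator: any measurable minimizer of `M_n` over `Θ`
    (θbar : ℕ → Ω → EuclideanSpace ℝ (Fin m))
    (hθbarmeas : ∀ n, Measurable (θbar n))
    (hθbarmem : ∀ n ω, θbar n ω ∈ Θ)
    (hθbarmin : ∀ n ω, ∀ θ ∈ Θ, Mn n ω (θbar n ω) ≤ Mn n ω θ) :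
    TendstoInMeasure P (fun n ω => θbar n ω) atTop (fun _ => θstar) :=
  stmt_3_general P Θ hΘ θstar hθstar S Ψ hΨmeas ε hεmeas hεindep hεident V hVmeas hVindep hVident
    hVcent hVsq hindepεV Mn hMn hObs hEsp hC1a hC1b hC3 θbar hθbarmem hθbarmin
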